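/- In G_alt³, for any fixed path p of length 2, the number of critical paths containing p as a subpath is at most |V₂⁺(r)|. -/

import Mathlib

/-
The step from layer `n` to layer `n + 1` of a critical path adds the step vector of index
`n mod 3` to the coordinates `n mod 3` and `n mod 3 + 1`. The coordinates of vectors in `V₂⁺(r)`
lie in `[0, r]`, so they are recovered from their residues mod `3Dr`. Hence the two edges of a
path through layers `i, i + 1, i + 2` determine the step vectors of indices `i` and `i + 1`
mod 3, and then the vertex in layer `i` determines the start vertex: a critical path through
the fixed path is determined by its step vector of index `i + 2` mod 3.
-/

/-- `V₂⁺(r)`: lattice points of `ℤ²` with nonnegative coordinates that are vertices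
(extreme points) of the convex hull of the lattice points in the disk of radius `r`. -/
def V2plus (r : ℕ) : Set (ℤ × ℤ) :=
  {p : ℤ × ℤ | 0 ≤ p.1 ∧ 0 ≤ p.2 ∧
    ((p.1 : ℝ), (p.2 : ℝ)) ∈ Set.extremePoints ℝ (convexHull ℝ
      {x : ℝ × ℝ | ∃ q : ℤ × ℤ, (q.1 : ℝ) ^ 2 + (q.2 : ℝ) ^ 2 ≤ (r : ℝ) ^ 2 ∧
        x = ((q.1 : ℝ), (q.2 : ℝ))})}

/-- The layer-`i` vertex of the critical path of `G_alt³` determined by start vertex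
`x ∈ (ℤ/(3Dr)ℤ)⁴` and step vectors `g, g', g'' ∈ V₂⁺(r)`. -/
def cv3 (M : ℕ) (x : Fin 4 → ZMod M) (g g' g'' : ℤ × ℤ) (i : ℕ) : Fin 4 → ZMod M :=
  ![x 0 + (((((i + 2) / 3 : ℕ) : ℤ) * g.1 : ℤ) : ZMod M),
    x 1 + (((((i + 2) / 3 : ℕ) : ℤ) * g.2 + (((i + 1) / 3 : ℕ) : ℤ) * g'.1 : ℤ) : ZMod M),
    x 2 + (((((i + 1) / 3 : ℕ) : ℤ) * g'.2 + ((i / 3 : ℕ) : ℤ) * g''.1 : ℤ) : ZMod M),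
    x 3 + ((((i / 3 : ℕ) : ℤ) * g''.2 : ℤ) : ZMod M)]

open Set

lemma V2plus_subset_Icc (r : ℕ) : V2plus r ⊆ Icc 0 (r : ℤ) ×ˢ Icc 0 (r : ℤ) := by
  rintro p ⟨h1, h2, hext⟩
  obtain ⟨q, hq, hpq⟩ := extremePoints_convexHull_subset hext
  obtain rfl : p = q := by simpa [Prod.ext_iff] using hpq
  have hq : p.1 ^ 2 + p.2 ^ 2 ≤ (r : ℤ) ^ 2 := by exact_mod_cast hq
  exact ⟨⟨h1, by nlinarith⟩, ⟨h2, by nlinarith⟩⟩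

lemma V2plus_finite (r : ℕ) : (V2plus r).Finite :=
  ((finite_Icc _ _).prod (finite_Icc _ _)).subset (V2plus_subset_Icc r)

lemma intCast_injOn_Icc {M r : ℕ} (hM : M = 0 ∨ r < M) :
    InjOn (Int.cast : ℤ → ZMod M) (Icc 0 r) := by
  rintro a ⟨ha, har⟩ b ⟨hb, hbr⟩ hab
  rw [ZMod.intCast_eq_intCast_iff'] at hab
  rcases hM with rfl | hM
  · simpa using hab
  · rwa [Int.emod_eq_of_lt ha (by omega), Int.emod_eq_of_lt hb (by omega)] at hab

lemma vec3_apply_mem {α : Type*} {V : Set α} {a b c : α} (ha : a ∈ V) (hb : b ∈ V) (hc : c ∈ V)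
    (k : Fin 3) : ![a, b, c] k ∈ V := by
  fin_cases k <;> assumption

def embedAt (M : ℕ) (j : Fin 3) (a : ℤ × ℤ) : Fin 4 → ZMod M :=
  Pi.single j.castSucc (a.1 : ZMod M) + Pi.single j.succ (a.2 : ZMod M)

lemma embedAt_inj {M : ℕ} {j : Fin 3} {a b : ℤ × ℤ} :
    embedAt M j a = embedAt M j b ↔
      Prod.map Int.cast Int.cast a = (Prod.map Int.cast Int.cast b : ZMod M × ZMod M) := by
  constructor
  · intro h
    have h1 := congrFun h j.castSucc
    have h2 := congrFun h j.succ
    simp [embedAt, j.castSucc_lt_succ.ne, j.castSucc_lt_succ.ne'] at h1 h2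
    exact Prod.ext h1 h2
  · intro h
    simp only [Prod.map, Prod.mk.injEq] at h
    simp [embedAt, h]

lemma cv3_succ (M : ℕ) (x : Fin 4 → ZMod M) (g g' g'' : ℤ × ℤ) (n : ℕ) :
    cv3 M x g g' g'' (n + 1) =
      cv3 M x g g' g'' n + embedAt M (Fin.ofNat 3 n) (![g, g', g''] (Fin.ofNat 3 n)) := by
  obtain ⟨k, rfl | rfl | rfl⟩ : ∃ k, n = 3 * k ∨ n = 3 * k + 1 ∨ n = 3 * k + 2 :=
    ⟨n / 3, by omega⟩
  all_goals
    funext c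
    fin_cases c
  all_goals
    simp only [cv3, Nat.add_assoc, Nat.reduceAdd, Nat.mul_add_div (show 0 < 3 by norm_num),
      Nat.mul_div_cancel_left _ (show 0 < 3 by norm_num), Fin.ofNat, Nat.mul_add_mod,
      Nat.mul_mod_right]
    simp [embedAt, Fin.ext_iff]
  all_goals ring

lemma cv3_injective_start (M : ℕ) (g g' g'' : ℤ × ℤ) (n : ℕ) :
    Function.Injective fun x => cv3 M x g g' g'' n := by
  have hadd : ∀ x, cv3 M x g g' g'' n = x + cv3 M 0 g g' g'' n := by
    intro x
    funext c
    fin_cases c <;> simp [cv3]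
  intro x y (hxy : cv3 M x g g' g'' n = cv3 M y g g' g'' n)
  rw [hadd x, hadd y] at hxy
  exact add_right_cancel hxy

def criticalPathsThrough (M : ℕ) (V : Set (ℤ × ℤ)) (i : ℕ) (w : Fin 3 → Fin 4 → ZMod M) :
    Set ((Fin 4 → ZMod M) × (ℤ × ℤ) × (ℤ × ℤ) × (ℤ × ℤ)) :=
  {q | q.2.1 ∈ V ∧ q.2.2.1 ∈ V ∧ q.2.2.2 ∈ V ∧
    ∀ t : Fin 3, cv3 M q.1 q.2.1 q.2.2.1 q.2.2.2 (i + (t : ℕ)) = w t}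

section

variable {M : ℕ} {V : Set (ℤ × ℤ)} {i : ℕ} {w : Fin 3 → Fin 4 → ZMod M}

lemma injOn_criticalPathsThrough
    (hV : InjOn (Prod.map Int.cast Int.cast : ℤ × ℤ → ZMod M × ZMod M) V) :
    InjOn (fun q => ![q.2.1, q.2.2.1, q.2.2.2] (Fin.ofNat 3 (i + 2)))
      (criticalPathsThrough M V i w) := by
  rintro ⟨x, g, g', g''⟩ ⟨hg, hg', hg'', hx⟩ ⟨y, h, h', h''⟩ ⟨hh, hh', hh'', hy⟩ hfree
  dsimp only at hg hg' hg'' hx hh hh' hh'' hy hfree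
  have hstep : ∀ t : Fin 2,
      ![g, g', g''] (Fin.ofNat 3 (i + t)) = ![h, h', h''] (Fin.ofNat 3 (i + t)) := by
    intro t
    refine hV (vec3_apply_mem hg hg' hg'' _) (vec3_apply_mem hh hh' hh'' _)
      ((embedAt_inj (j := Fin.ofNat 3 (i + t))).mp ?_)
    have e1 := hx t.castSucc
    have e2 := hx t.succ
    have f1 := hy t.castSucc
    have f2 := hy t.succ
    simp only [Fin.val_castSucc, Fin.val_succ, ← add_assoc, cv3_succ] at e1 e2 f1 f2
    rw [e1] at e2
    rw [f1] at f2
    exact add_left_cancel (e2.trans f2.symm)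
  have hvec : ![g, g', g''] = ![h, h', h''] := by
    funext k
    obtain ⟨m, hm, rfl⟩ : ∃ m < 3, Fin.ofNat 3 (i + m) = k :=
      ⟨(k + 3 - i % 3) % 3, by omega, Fin.ext (by simp; omega)⟩
    interval_cases m
    exacts [hstep 0, hstep 1, hfree]
  obtain rfl : g = h := congrFun hvec 0
  obtain rfl : g' = h' := congrFun hvec 1
  obtain rfl : g'' = h'' := congrFun hvec 2
  obtain rfl : x = y := cv3_injective_start M g g' g'' i ((hx 0).trans (hy 0).symm)
  rfl

lemma ncard_criticalPathsThrough_le (hfin : V.Finite)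
    (hV : InjOn (Prod.map Int.cast Int.cast : ℤ × ℤ → ZMod M × ZMod M) V) :
    (criticalPathsThrough M V i w).ncard ≤ V.ncard := by
  refine ncard_le_ncard_of_injOn _ ?_ (injOn_criticalPathsThrough hV) hfin
  rintro ⟨x, g, g', g''⟩ ⟨hg, hg', hg'', -⟩
  exact vec3_apply_mem hg hg' hg'' _

end

theorem stmt9_general (D r : ℕ)
    (i : ℕ)
    (w : Fin 3 → (Fin 4 → ZMod (3 * D * r))) :
    Set.ncard {q : (Fin 4 → ZMod (3 * D * r)) × ((ℤ × ℤ) × (ℤ × ℤ) × (ℤ × ℤ)) |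
        q.2.1 ∈ V2plus r ∧ q.2.2.1 ∈ V2plus r ∧ q.2.2.2 ∈ V2plus r ∧
        ∀ t : Fin 3, cv3 (3 * D * r) q.1 q.2.1 q.2.2.1 q.2.2.2 (i + (t : ℕ)) = w t} ≤
      Set.ncard (V2plus r) := by
  have hM : 3 * D * r = 0 ∨ r < 3 * D * r := by
    rcases Nat.eq_zero_or_pos D with rfl | hD
    · simp
    rcases Nat.eq_zero_or_pos r with rfl | hr
    · simp
    · right; nlinarith
  have hcast := intCast_injOn_Icc hM
  exact ncard_criticalPathsThrough_le (V2plus_finite r)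
    ((hcast.prodMap hcast).mono (V2plus_subset_Icc r))

/-- In `G_alt³`, for any fixed path `p` of length 2 (given by its three
consecutive vertices `w 0, w 1, w 2` in layers `i, i+1, i+2`), the number of critical
paths (indexed by `(x, γ, γ', γ'') ∈ (ℤ/(3Dr)ℤ)⁴ × V₂⁺(r)³`) containing `p` as a
subpath is at most `|V₂⁺(r)|`. -/
theorem stmt9 (D r : ℕ) (hD : 0 < D) (hr : 0 < r)
    (i : ℕ) (hi : i + 2 ≤ 3 * D)
    (w : Fin 3 → (Fin 4 → ZMod (3 * D * r))) :
    Set.ncard {q : (Fin 4 → ZMod (3 * D * r)) × ((ℤ × ℤ) × (ℤ × ℤ) × (ℤ × ℤ)) |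
        q.2.1 ∈ V2plus r ∧ q.2.2.1 ∈ V2plus r ∧ q.2.2.2 ∈ V2plus r ∧
        ∀ t : Fin 3, cv3 (3 * D * r) q.1 q.2.1 q.2.2.1 q.2.2.2 (i + (t : ℕ)) = w t} ≤
      Set.ncard (V2plus r) :=
  stmt9_general D r i w
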